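/- arXiv:1304.5449 — 2 statements merged into one kernel-verified Lean document; each statement's English description precedes it below -/
import Mathlib

section
/- f →* f' holds if and only if f[w] ≤ f'[w] for every constraint w and f ≠ f'. -/
def DirectSucc {C : Type} (f f' : C → ℕ) : Prop :=
  ∃ w₀ : C, f' w₀ = f w₀ + 1 ∧ ∀ w : C, w ≠ w₀ → f' w = f w

lemma directSucc_eq_covBy {C : Type} : (DirectSucc : (C → ℕ) → (C → ℕ) → Prop) = (· ⋖ ·) := by
  ext f f'
  simp only [DirectSucc, Pi.covBy_iff, Nat.covBy_iff_add_one_eq]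
  exact exists_congr fun w₀ => and_congr eq_comm (forall₂_congr fun _ _ => eq_comm)

theorem stmt3_general (C : Type) [Fintype C]
    (f f' : C → ℕ) :
    Relation.TransGen DirectSucc f f' ↔ ((∀ w, f w ≤ f' w) ∧ f ≠ f') := by
  classical
  -- `C` finite makes `C → ℕ` a locally finite order, where `<` is the transitive closure of `⋖`.
  rw [directSucc_eq_covBy, ← lt_iff_transGen_covBy, lt_iff_le_and_ne, Pi.le_def]

theorem stmt3 (C : Type) [Fintype C] [Nonempty C] (nbLayers : C → ℕ)
    (f f' : C → ℕ)
    (hf : ∀ w, f w < nbLayers w) (hf' : ∀ w, f' w < nbLayers w) :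
    Relation.TransGen DirectSucc f f' ↔ ((∀ w, f w ≤ f' w) ∧ f ≠ f') :=
  stmt3_general C f f'
end

section
/- Completeness of MUC-guided relaxation: let S be a set of fronts (the 'satisfiable' fronts) that is upward closed in the following weak sense relevant to MUCs: suppose for every front f ∉ S there is a nonempty set M(f) ⊆ C ('MUC constraints') such that every g ∈ S with f ≤ g (coordinatewise) satisfies g[w] > f[w] for some w ∈ M(f). Then any search starting from ⊥ that, for each unsatisfiable front f, enqueues all fronts obtained by incrementing one coordinate in M(f), eventually reaches some element of S whenever there exists g ∈ S — formally: for any g ∈ S, there is a finite sequence ⊥ = f₀, f₁, …, f_m with f_m ∈ S where each f_{i+1} is obtained from f_i by incrementing one coordinate w ∈ M(f_i), and f_i ≤ g for all i. -/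
open Function Relation

theorem Relation.ReflTransGen.exists_nat_seq {α : Type*} {r : α → α → Prop} {a b : α}
    (h : ReflTransGen r a b) :
    ∃ (m : ℕ) (seq : ℕ → α), seq 0 = a ∧ seq m = b ∧ ∀ i < m, r (seq i) (seq (i + 1)) := by
  induction h with
  | refl => exact ⟨0, fun _ => a, rfl, rfl, fun i hi => absurd hi (Nat.not_lt_zero i)⟩
  | @tail b c _ hbc ih =>
    obtain ⟨m, seq, h0, hm, hstep⟩ := ih
    refine ⟨m + 1, update seq (m + 1) c, ?_, update_self .., fun i hi => ?_⟩
    · rwa [update_of_ne (Nat.succ_ne_zero m).symm]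
    · rcases Nat.lt_succ_iff_lt_or_eq.mp hi with hi | rfl
      · rw [update_of_ne (by omega), update_of_ne (by omega)]
        exact hstep i hi
      · rw [update_of_ne (by omega), update_self, hm]
        exact hbc

section Relaxation

variable {C : Type*} [DecidableEq C]

/-- A step of the MUC-guided search that never overshoots the satisfiable target `g`. -/
def IsRelaxationStep (S : Set (C → ℕ)) (M : (C → ℕ) → Set C) (g f f' : C → ℕ) : Prop :=
  f ∉ S ∧ f' ≤ g ∧ ∃ w ∈ M f, f' = update f w (f w + 1)

theorem sum_tsub_update_succ_lt [Fintype C] {f g : C → ℕ} {w : C} (hw : f w < g w) :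
    ∑ v, (g v - update f w (f w + 1) v) < ∑ v, (g v - f v) := by
  refine Finset.sum_lt_sum (fun v _ => ?_) ⟨w, Finset.mem_univ w, by simp; omega⟩
  rcases eq_or_ne v w with rfl | hv
  · simp only [update_self]
    omega
  · rw [update_of_ne hv]

theorem exists_reflTransGen_isRelaxationStep [Fintype C] {S : Set (C → ℕ)} {M : (C → ℕ) → Set C}
    {g : C → ℕ} (hM : ∀ f ≤ g, f ∉ S → ∃ w ∈ M f, f w < g w) (f : C → ℕ) (hf : f ≤ g) :
    ∃ h ∈ S, ReflTransGen (IsRelaxationStep S M g) f h := by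
  by_cases hfS : f ∈ S
  · exact ⟨f, hfS, .refl⟩
  obtain ⟨w, hwM, hw⟩ := hM f hf hfS
  have hf' : update f w (f w + 1) ≤ g := update_le_iff.2 ⟨hw, fun v _ => hf v⟩
  obtain ⟨h, hS, hpath⟩ := exists_reflTransGen_isRelaxationStep hM _ hf'
  exact ⟨h, hS, .head ⟨hfS, hf', w, hwM, rfl⟩ hpath⟩
termination_by ∑ v, (g v - f v)
decreasing_by exact sum_tsub_update_succ_lt hw

end Relaxation

theorem stmt10 (C : Type) [Fintype C] [DecidableEq C] (nbLayers : C → ℕ)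
    (S : Set (C → ℕ)) (M : (C → ℕ) → Set C)
    (hMUC : ∀ f : C → ℕ, (∀ w, f w < nbLayers w) → f ∉ S →
      ∀ g ∈ S, (∀ w, g w < nbLayers w) → (∀ w, f w ≤ g w) → ∃ w ∈ M f, f w < g w) :
    ∀ g ∈ S, (∀ w, g w < nbLayers w) →
      ∃ (m : ℕ) (seq : ℕ → C → ℕ),
        seq 0 = (fun _ => 0) ∧
        seq m ∈ S ∧
        (∀ i ≤ m, ∀ w, seq i w ≤ g w) ∧
        (∀ i < m, seq i ∉ S ∧
          ∃ w ∈ M (seq i), seq (i + 1) = Function.update (seq i) w (seq i w + 1)) := by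
  intro g hgS hglt
  have hM : ∀ f ≤ g, f ∉ S → ∃ w ∈ M f, f w < g w := fun f hf hfS =>
    hMUC f (fun w => (hf w).trans_lt (hglt w)) hfS g hgS hglt hf
  obtain ⟨h, hS, hpath⟩ := exists_reflTransGen_isRelaxationStep hM 0 fun w => Nat.zero_le (g w)
  obtain ⟨m, seq, h0, hm, hstep⟩ := hpath.exists_nat_seq
  refine ⟨m, seq, h0, hm ▸ hS, fun i hi => ?_, fun i hi => ⟨(hstep i hi).1, (hstep i hi).2.2⟩⟩
  cases i with
  | zero => exact h0 ▸ fun w => Nat.zero_le (g w)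
  | succ j => exact (hstep j (by omega)).2.1
end
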